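/- arXiv:2311.14923 — 5 statements merged into one kernel-verified Lean document; each statement's English description precedes it below -/
import Mathlib

section
/- For every graph G of order n with minimum degree δ(G) ≥ 1, the strength of G satisfies str(G) ≥ n + δ(G). -/
open SimpleGraph Finset

/-- `strf G f` is the maximum edge label `f(u)+f(v)` for the numbering given by the
equivalence `f` (vertex `v` receives label `(f v : ℕ) + 1 ∈ {1,…,n}`). -/
noncomputable def strf {V : Type*} [Fintype V] (G : SimpleGraph V)
    (f : V ≃ Fin (Fintype.card V)) : ℕ :=
  sSup {s | ∃ u v, G.Adj u v ∧ s = ((f u : ℕ) + 1) + ((f v : ℕ) + 1)}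

/-- The strength of a graph: minimum over numberings of the maximum edge label. -/
noncomputable def strength {V : Type*} [Fintype V] (G : SimpleGraph V) : ℕ :=
  sInf {s | ∃ f : V ≃ Fin (Fintype.card V), s = strf G f}

/-- The independence number of a graph. -/
noncomputable def indepNum {V : Type*} [Fintype V] (G : SimpleGraph V) : ℕ :=
  sSup {k | ∃ s : Finset V, (s : Set V).Pairwise (fun u v => ¬ G.Adj u v) ∧ s.card = k}

/-! The vertex labelled `n` has at least `δ` neighbours, which carry distinct labels, so one of
them is labelled at least `δ`; the edge between the two has label sum at least `n + δ`. -/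

theorem Finset.exists_card_le_add_one_of_injOn {α : Type*} {s : Finset α} (hs : s.Nonempty)
    {g : α → ℕ} (hg : Set.InjOn g s) : ∃ a ∈ s, #s ≤ g a + 1 := by
  let m := (s.image g).max' (hs.image g)
  obtain ⟨a, ha, hma⟩ := mem_image.mp ((s.image g).max'_mem (hs.image g))
  refine ⟨a, ha, ?_⟩
  have hsub : s.image g ⊆ range (m + 1) := fun x hx =>
    mem_range.mpr (Nat.lt_succ_of_le ((s.image g).le_max' x hx))
  calc #s = #(s.image g) := (card_image_of_injOn hg).symm
    _ ≤ #(range (m + 1)) := card_le_card hsub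
    _ = g a + 1 := by rw [card_range, hma]

theorem SimpleGraph.exists_adj_degree_le_add_one {V : Type*} [Fintype V] (G : SimpleGraph V)
    [DecidableRel G.Adj] {u : V} (hu : 0 < G.degree u) {g : V → ℕ} (hg : Function.Injective g) :
    ∃ v, G.Adj u v ∧ G.degree u ≤ g v + 1 := by
  rw [← card_neighborFinset_eq_degree] at hu ⊢
  obtain ⟨v, hv, hle⟩ :=
    exists_card_le_add_one_of_injOn (card_pos.mp hu) hg.injOn
  exact ⟨v, (mem_neighborFinset G u v).mp hv, hle⟩

theorem add_le_strf {V : Type*} [Fintype V] {G : SimpleGraph V}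
    (f : V ≃ Fin (Fintype.card V)) {u v : V} (h : G.Adj u v) :
    ((f u : ℕ) + 1) + ((f v : ℕ) + 1) ≤ strf G f := by
  refine le_csSup ⟨2 * Fintype.card V, ?_⟩ ⟨u, v, h, rfl⟩
  rintro _ ⟨a, b, -, rfl⟩
  have := (f a).isLt
  have := (f b).isLt
  omega

theorem card_add_minDegree_le_strf {V : Type*} [Fintype V] (G : SimpleGraph V)
    [DecidableRel G.Adj] (hδ : 1 ≤ G.minDegree) (f : V ≃ Fin (Fintype.card V)) :
    Fintype.card V + G.minDegree ≤ strf G f := by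
  have : Nonempty V := by
    by_contra hV
    rw [not_nonempty_iff] at hV
    simp [minDegree_of_subsingleton] at hδ
  set u := f.symm ⟨Fintype.card V - 1, by simp [Fintype.card_pos]⟩
  have hfu : (f u : ℕ) + 1 = Fintype.card V := by
    simp only [u, Equiv.apply_symm_apply]
    exact Nat.sub_add_cancel Fintype.card_pos
  have hδu := G.minDegree_le_degree u
  obtain ⟨v, huv, hv⟩ :=
    G.exists_adj_degree_le_add_one (u := u) (g := fun w => (f w : ℕ)) (by omega)
      (Fin.val_injective.comp f.injective)
  calc Fintype.card V + G.minDegree ≤ ((f u : ℕ) + 1) + ((f v : ℕ) + 1) := by omega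
    _ ≤ strf G f := add_le_strf f huv

theorem strength_ge_card_add_minDegree {V : Type*} [Fintype V] (G : SimpleGraph V)
    [DecidableRel G.Adj] (hδ : 1 ≤ G.minDegree) :
    Fintype.card V + G.minDegree ≤ strength G :=
  le_csInf ⟨_, Fintype.equivFin V, rfl⟩ fun _ ⟨f, hf⟩ =>
    hf ▸ card_add_minDegree_le_strf G hδ f
end

section
/- For every graph G of order n with at least one edge, str(G) ≥ 2n - 2β(G) + 1, where β(G) is the independence number of G. -/
open SimpleGraph Finset

theorem strength_ge_two_card_sub_two_indepNum {V : Type*} [Fintype V] (G : SimpleGraph V)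
    (hE : G.edgeSet.Nonempty) :
    2 * Fintype.card V - 2 * _root_.indepNum G + 1 ≤ strength G := by
  classical
  set n := Fintype.card V with hn
  set β := _root_.indepNum G with hβ
  obtain ⟨u₀, v₀, huv₀⟩ : ∃ u v, G.Adj u v := by
    obtain ⟨e, he⟩ := hE
    induction e using Sym2.ind with
    | _ u v => exact ⟨u, v, he⟩
  set I : Set ℕ := {k | ∃ s : Finset V,
    (s : Set V).Pairwise (fun u v => ¬ G.Adj u v) ∧ s.card = k} with hI
  have hβeq : sSup I = β := by rw [hβ]; rfl
  have hbddI : BddAbove I := by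
    refine ⟨n, fun k hk => ?_⟩
    obtain ⟨s, _, rfl⟩ := hk
    exact s.card_le_univ
  have hneI : I.Nonempty := ⟨0, ∅, by simp, by simp⟩
  have hβI : β ∈ I := hβeq ▸ Nat.sSup_mem hneI hbddI
  have hβn : β + 1 ≤ n := by
    obtain ⟨s, hp, hc⟩ := hβI
    have hsne : s ≠ Finset.univ := by
      rintro rfl
      exact hp (by simp) (by simp) huv₀.ne huv₀
    have : s.card < n := Finset.card_lt_card (Finset.ssubset_univ_iff.mpr hsne)
    omega
  -- any set of β+1 vertices contains an edge
  have key : ∀ s : Finset V, s.card = β + 1 → ∃ u ∈ s, ∃ v ∈ s, G.Adj u v := by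
    intro s hs
    by_contra h
    push_neg at h
    have hmem : β + 1 ∈ I := ⟨s, fun u hu v hv _ => h u hu v hv, hs⟩
    have := le_csSup hbddI hmem
    rw [hβeq] at this
    omega
  refine le_csInf ⟨strf G (Fintype.equivFin V), Fintype.equivFin V, rfl⟩ ?_
  rintro b ⟨f, rfl⟩
  have hnpos : 0 < n := by omega
  set a : Fin n := ⟨n - (β + 1), by omega⟩ with ha
  set s : Finset V := (Finset.Ici a).image f.symm with hs
  have hcard : s.card = β + 1 := by
    rw [hs, Finset.card_image_of_injective _ f.symm.injective, Fin.card_Ici]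
    simp only [ha]
    omega
  obtain ⟨u, hu, v, hv, huv⟩ := key s hcard
  have hfu : n - (β + 1) ≤ (f u : ℕ) := by
    rw [hs, Finset.mem_image] at hu
    obtain ⟨i, hi, rfl⟩ := hu
    rw [Finset.mem_Ici] at hi
    have h := Fin.le_def.mp hi
    simp only [Equiv.apply_symm_apply]
    exact h
  have hfv : n - (β + 1) ≤ (f v : ℕ) := by
    rw [hs, Finset.mem_image] at hv
    obtain ⟨i, hi, rfl⟩ := hv
    rw [Finset.mem_Ici] at hi
    have h := Fin.le_def.mp hi
    simp only [Equiv.apply_symm_apply]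
    exact h
  have hne : (f u : ℕ) ≠ (f v : ℕ) := by
    intro h
    exact huv.ne (f.injective (Fin.val_injective h))
  have hbddS : BddAbove {s | ∃ u v, G.Adj u v ∧ s = ((f u : ℕ) + 1) + ((f v : ℕ) + 1)} := by
    refine ⟨2 * n + 2, ?_⟩
    rintro x ⟨p, q, _, rfl⟩
    have := (f p).isLt
    have := (f q).isLt
    omega
  have hmem : ((f u : ℕ) + 1) + ((f v : ℕ) + 1) ∈
      {s | ∃ u v, G.Adj u v ∧ s = ((f u : ℕ) + 1) + ((f v : ℕ) + 1)} := ⟨u, v, huv, rfl⟩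
  have hle := le_csSup hbddS hmem
  have h1 := (f u).isLt
  have h2 := (f v).isLt
  unfold strf
  omega
end

section
/- For every graph G of order n with at least one edge, str(G) ≤ 2n - β(G), where β(G) is the independence number of G. -/
open SimpleGraph Finset

theorem strength_le_two_card_sub_indepNum {V : Type*} [Fintype V] (G : SimpleGraph V)
    (hE : G.edgeSet.Nonempty) :
    strength G ≤ 2 * Fintype.card V - _root_.indepNum G := by
  classical
  set n := Fintype.card V with hn
  -- a maximum independent set
  have hmem : _root_.indepNum G ∈ {k | ∃ s : Finset V,
      (s : Set V).Pairwise (fun u v => ¬ G.Adj u v) ∧ s.card = k} := by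
    apply Nat.sSup_mem
    · exact ⟨0, ∅, by simp, by simp⟩
    · refine ⟨n, ?_⟩
      rintro k ⟨s, _, rfl⟩
      simpa using s.card_le_univ
  obtain ⟨s, hind, hcard⟩ := hmem
  have hkn : s.card ≤ n := by simpa using s.card_le_univ
  -- build the numbering
  set eL := Fintype.equivFin {v : V // ¬ v ∈ s} with heL
  set eR := Fintype.equivFin {v : V // v ∈ s} with heR
  have hsc : Fintype.card {v : V // ¬ v ∈ s} + Fintype.card {v : V // v ∈ s} = n := by
    rw [Fintype.card_subtype_compl]
    have h1 : Fintype.card {v : V // v ∈ s} = s.card := Fintype.card_coe s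
    omega
  have hcardL : Fintype.card {v : V // ¬ v ∈ s} = n - s.card := by
    rw [Fintype.card_subtype_compl, Fintype.card_coe]
  set f : V ≃ Fin n :=
    ((((Equiv.sumCompl (fun v => v ∈ s)).symm.trans
        (Equiv.sumComm _ _)).trans
      (Equiv.sumCongr eL eR)).trans finSumFinEquiv).trans (finCongr hsc) with hf
  have hvalL : ∀ u : V, ¬ u ∈ s → (f u : ℕ) < n - s.card := by
    intro u hu
    have h1 : f u = finCongr hsc (finSumFinEquiv (Sum.inl (eL ⟨u, hu⟩))) := by
      simp [hf, Equiv.sumCompl_symm_apply_of_neg hu]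
    have h2 := (eL ⟨u, hu⟩).isLt
    rw [h1]
    simp only [finCongr_apply, Fin.coe_cast, finSumFinEquiv_apply_left, Fin.coe_castAdd]
    omega
  -- bound each edge label
  have hbound : ∀ u v : V, G.Adj u v →
      ((f u : ℕ) + 1) + ((f v : ℕ) + 1) ≤ 2 * n - s.card := by
    intro u v huv
    have hnot : ¬ u ∈ s ∨ ¬ v ∈ s := by
      by_contra h
      push_neg at h
      exact hind h.1 h.2 huv.ne huv
    have hu' : (f u : ℕ) < n := (f u).isLt
    have hv' : (f v : ℕ) < n := (f v).isLt
    rcases hnot with h | h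
    · have := hvalL u h; omega
    · have := hvalL v h; omega
  -- strf f ≤ 2n - card s
  obtain ⟨e, he⟩ := hE
  induction e using Sym2.ind with
  | _ a b =>
    have hab : G.Adj a b := he
    have hstrf : strf G f ≤ 2 * n - s.card := by
      refine csSup_le ⟨_, ⟨a, b, hab, rfl⟩⟩ ?_
      rintro x ⟨u, v, huv, rfl⟩
      exact hbound u v huv
    calc strength G ≤ strf G f := Nat.sInf_le ⟨f, rfl⟩
      _ ≤ 2 * n - s.card := hstrf
      _ ≤ 2 * n - _root_.indepNum G := by omega
end

section
/- The strength of the complete k-partite graph K_{n_1,...,n_k} (with k ≥ 2 and n = n_1 + ... + n_k) equals 2n - max_i n_i. -/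
open SimpleGraph Finset

lemma exists_split_equiv {V : Type*} [Fintype V] (q : V → Prop) [DecidablePred q]
    {a b n : ℕ} (ha : Fintype.card {v // ¬ q v} = a) (hb : Fintype.card {v // q v} = b)
    (hab : a + b = n) :
    ∃ e : V ≃ Fin n, (∀ v, q v → a ≤ (e v : ℕ)) ∧ (∀ v, ¬ q v → (e v : ℕ) < a) := by
  refine ⟨((Equiv.sumCompl q).symm.trans ((Equiv.sumComm _ _).trans
    (((Fintype.equivFinOfCardEq ha).sumCongr (Fintype.equivFinOfCardEq hb)).trans
      (finSumFinEquiv.trans (finCongr hab))))), ?_, ?_⟩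
  · intro v hv
    simp only [Equiv.trans_apply]
    rw [Equiv.sumCompl_symm_apply_of_pos hv]
    simp only [Equiv.sumComm_apply, Sum.swap_inl, Equiv.sumCongr_apply, Sum.map_inr,
      finSumFinEquiv_apply_right, finCongr_apply, Fin.coe_cast, Fin.coe_natAdd]
    omega
  · intro v hv
    simp only [Equiv.trans_apply]
    rw [Equiv.sumCompl_symm_apply_of_neg hv]
    simp only [Equiv.sumComm_apply, Sum.swap_inr, Equiv.sumCongr_apply, Sum.map_inl,
      finSumFinEquiv_apply_left, finCongr_apply, Fin.coe_cast, Fin.coe_castAdd]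
    exact (Fintype.equivFinOfCardEq ha ⟨v, hv⟩).isLt

set_option maxHeartbeats 1000000 in
theorem strength_completeMultipartite {V : Type*} [Fintype V] [DecidableEq V]
    (G : SimpleGraph V) (k : ℕ) (hk : 2 ≤ k) (p : V → Fin k)
    (hpart : ∀ i, ∃ v, p v = i)
    (hadj : ∀ u v, G.Adj u v ↔ p u ≠ p v) :
    strength G =
      2 * Fintype.card V - Finset.univ.sup (fun i => (Finset.univ.filter (p · = i)).card) := by
  set n := Fintype.card V with hn
  set M := Finset.univ.sup (fun i : Fin k => (Finset.univ.filter (p · = i)).card) with hMdef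
  -- basic facts
  have hn1 : 1 ≤ n := by
    obtain ⟨v, -⟩ := hpart ⟨0, by omega⟩
    exact Fintype.card_pos_iff.mpr ⟨v⟩
  have hMn : M ≤ n := by
    apply Finset.sup_le
    intro i _
    exact le_trans (Finset.card_le_card (Finset.subset_univ _)) (by simp [hn])
  -- a maximal part
  haveI : Nonempty (Fin k) := ⟨⟨0, by omega⟩⟩
  obtain ⟨i₀, -, hMi₀⟩ := Finset.exists_mem_eq_sup Finset.univ
    Finset.univ_nonempty (fun i : Fin k => (Finset.univ.filter (p · = i)).card)
  rw [← hMdef] at hMi₀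
  have hM1 : 1 ≤ M := by
    obtain ⟨v, hv⟩ := hpart i₀
    rw [hMi₀]
    exact Finset.card_pos.mpr ⟨v, by simp [hv]⟩
  -- every part has size ≤ M and size ≥ 1, and there is a vertex outside each part
  have hpartle : ∀ v : V, (Finset.univ.filter (p · = p v)).card ≤ M := by
    intro v
    rw [hMdef]
    exact Finset.le_sup (f := fun i => (Finset.univ.filter (p · = i)).card) (Finset.mem_univ (p v))
  have houtside : ∀ i : Fin k, ∃ v, p v ≠ i := by
    intro i
    obtain ⟨j, hj⟩ := Fintype.exists_ne_of_one_lt_card (by simp; omega) i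
    obtain ⟨v, hv⟩ := hpart j
    exact ⟨v, hv ▸ hj⟩
  -- n ≥ part size + 1
  have hcard_part : ∀ v : V, (Finset.univ.filter (p · = p v)).card + 1 ≤ n := by
    intro v
    obtain ⟨w, hw⟩ := houtside (p v)
    have hwmem : w ∉ Finset.univ.filter (p · = p v) := by simp [hw]
    calc (Finset.univ.filter (p · = p v)).card + 1
        = (insert w (Finset.univ.filter (p · = p v))).card :=
          (Finset.card_insert_of_notMem hwmem).symm
      _ ≤ n := by rw [hn]; exact Finset.card_le_univ _
  -- edges exist
  obtain ⟨v₀, hv₀⟩ := hpart ⟨0, by omega⟩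
  obtain ⟨v₁, hv₁⟩ := hpart ⟨1, by omega⟩
  have hadj01 : G.Adj v₀ v₁ := by
    rw [hadj, hv₀, hv₁]
    intro h
    exact absurd (Fin.mk.injEq .. ▸ h) (by simp)
  -- edge-label sets are nonempty and bounded
  have hne : ∀ f : V ≃ Fin n,
      {s | ∃ u v, G.Adj u v ∧ s = ((f u : ℕ) + 1) + ((f v : ℕ) + 1)}.Nonempty :=
    fun f => ⟨_, v₀, v₁, hadj01, rfl⟩
  have hbdd : ∀ f : V ≃ Fin n,
      BddAbove {s | ∃ u v, G.Adj u v ∧ s = ((f u : ℕ) + 1) + ((f v : ℕ) + 1)} := by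
    intro f
    refine ⟨2 * n, ?_⟩
    rintro s ⟨u, v, -, rfl⟩
    have h1 : (f u : ℕ) < n := (f u).isLt
    have h2 : (f v : ℕ) < n := (f v).isLt
    omega
  -- LOWER BOUND: every numbering has an edge with label sum ≥ 2n - M
  have hlower : ∀ f : V ≃ Fin n, 2 * n - M ≤ strf G f := by
    intro f
    set w : V := f.symm ⟨n - 1, by omega⟩ with hw
    set m := (Finset.univ.filter (p · = p w)).card with hm
    have hm1 : 1 ≤ m := Finset.card_pos.mpr ⟨w, by simp⟩
    have hmM : m ≤ M := hpartle w
    have hmn : m + 1 ≤ n := hcard_part w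
    -- there is j ∈ [1, m] with the vertex labelled n - j outside w's part
    have hex : ∃ j : Fin (m + 1), p (f.symm ⟨n - 1 - j, by omega⟩) ≠ p w := by
      by_contra hcon
      push_neg at hcon
      have hinj : Set.InjOn (fun j : Fin (m + 1) => f.symm ⟨n - 1 - j, by omega⟩)
          (Finset.univ : Finset (Fin (m + 1))) := by
        intro a _ b _ hab
        have h2 : n - 1 - (a : ℕ) = n - 1 - (b : ℕ) := by
          simpa using congrArg Fin.val (f.symm.injective hab)
        have ha := a.isLt
        have hb := b.isLt
        exact Fin.ext (by omega)
      have hmaps : ∀ j ∈ (Finset.univ : Finset (Fin (m + 1))),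
          f.symm ⟨n - 1 - j, by omega⟩ ∈ Finset.univ.filter (p · = p w) := by
        intro j _
        simp [hcon j]
      have := Finset.card_le_card_of_injOn _ hmaps hinj
      rw [Finset.card_univ, Fintype.card_fin] at this
      omega
    obtain ⟨j, hj⟩ := hex
    set v : V := f.symm ⟨n - 1 - j, by omega⟩ with hv
    have hj1 : 1 ≤ (j : ℕ) := by
      by_contra h0
      push_neg at h0
      apply hj
      have hv' : v = w := by
        show f.symm ⟨n - 1 - (j : ℕ), by omega⟩ = f.symm ⟨n - 1, by omega⟩
        congr 1
        exact Fin.ext (by simp; omega)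
      exact congrArg p hv'
    have hadjwv : G.Adj w v := (hadj w v).mpr (fun h => hj h.symm)
    have hmem : ((f w : ℕ) + 1) + ((f v : ℕ) + 1) ∈
        {s | ∃ u v, G.Adj u v ∧ s = ((f u : ℕ) + 1) + ((f v : ℕ) + 1)} :=
      ⟨w, v, hadjwv, rfl⟩
    have hle := le_csSup (hbdd f) hmem
    have hfw : (f w : ℕ) = n - 1 := by rw [hw]; simp
    have hfv : (f v : ℕ) = n - 1 - j := by rw [hv]; simp
    have hjm : (j : ℕ) ≤ m := by omega
    calc 2 * n - M ≤ ((f w : ℕ) + 1) + ((f v : ℕ) + 1) := by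
          rw [hfw, hfv]; omega
      _ ≤ strf G f := hle
  -- UPPER BOUND: construct a good numbering
  have cardP : Fintype.card {v // p v = i₀} = M := by
    rw [Fintype.card_subtype, hMi₀]
  have cardQ : Fintype.card {v // ¬ p v = i₀} = n - M := by
    rw [Fintype.card_subtype_compl, cardP]
  obtain ⟨e, hePlo, heQhi⟩ := exists_split_equiv (fun v => p v = i₀) cardQ cardP (show n - M + M = n by omega)
  have hupper : strf G e ≤ 2 * n - M := by
    apply csSup_le (hne e)
    rintro s ⟨u, v, huv, rfl⟩
    have hpuv : p u ≠ p v := (hadj u v).mp huv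
    have hu : (e u : ℕ) < n := (e u).isLt
    have hv : (e v : ℕ) < n := (e v).isLt
    have hne' : (e u : ℕ) ≠ (e v : ℕ) := by
      intro h
      exact huv.ne (e.injective (Fin.ext h))
    by_cases h1 : p u = i₀
    · have h2 : ¬ p v = i₀ := fun h => hpuv (h1.trans h.symm)
      have := heQhi v h2
      omega
    · by_cases h2 : p v = i₀
      · have := heQhi u h1
        omega
      · have := heQhi u h1
        have := heQhi v h2
        omega
  -- combine
  apply le_antisymm
  · exact le_trans (Nat.sInf_le ⟨e, rfl⟩) hupper
  · refine le_csInf ⟨strf G e, e, rfl⟩ ?_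
    rintro s ⟨f, rfl⟩
    exact hlower f
end

section
/- Let G = K_{n_1,...,n_k} be a complete k-partite graph with parts V_1,...,V_k of sizes n_1,...,n_k, where n_1 = max_i n_i and n_1 ≥ n_2 + ... + n_k. Let G' be any spanning subgraph of G obtained by deleting edges with both endpoints outside V_1 only. Then str(G') = str(G) = 2(n_1 + ... + n_k) - n_1. -/
open SimpleGraph Finset

lemma bddAbove_strfSet {V : Type*} [Fintype V] (G : SimpleGraph V)
    (f : V ≃ Fin (Fintype.card V)) :
    BddAbove {s | ∃ u v, G.Adj u v ∧ s = ((f u : ℕ) + 1) + ((f v : ℕ) + 1)} := by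
  refine ⟨2 * Fintype.card V, ?_⟩
  rintro s ⟨u, v, _, rfl⟩
  have h1 := (f u).isLt
  have h2 := (f v).isLt
  omega

lemma strf_le {V : Type*} [Fintype V] (G : SimpleGraph V)
    (f : V ≃ Fin (Fintype.card V)) (c : ℕ)
    (h : ∀ u v, G.Adj u v → ((f u : ℕ) + 1) + ((f v : ℕ) + 1) ≤ c) :
    strf G f ≤ c := by
  apply csSup_le'
  rintro s ⟨u, v, huv, rfl⟩
  exact h u v huv

lemma le_strf {V : Type*} [Fintype V] (G : SimpleGraph V)
    (f : V ≃ Fin (Fintype.card V)) (u v : V) (h : G.Adj u v) :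
    ((f u : ℕ) + 1) + ((f v : ℕ) + 1) ≤ strf G f :=
  le_csSup (bddAbove_strfSet G f) ⟨u, v, h, rfl⟩

theorem strength_of_deleted_completeMultipartite {V : Type*} [Fintype V] [DecidableEq V]
(G G' : SimpleGraph V) (k : ℕ) (hk : 2 ≤ k) (p : V → Fin k) (i₀ : Fin k)
    (hpart : ∀ i, ∃ v, p v = i)
    (hadj : ∀ u v, G.Adj u v ↔ p u ≠ p v)
    (n : Fin k → ℕ) (hn : ∀ i, n i = (Finset.univ.filter (p · = i)).card)
    (hmax : ∀ i, n i ≤ n i₀)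
    (hbig : ∑ i ∈ Finset.univ.erase i₀, n i ≤ n i₀)
    (hsub : G' ≤ G)
    (hkeep : ∀ u v, G.Adj u v → (p u = i₀ ∨ p v = i₀) → G'.Adj u v) :
    strength G' = strength G ∧ strength G = 2 * Fintype.card V - n i₀ := by
  classical
  set N := Fintype.card V with hNdef
  set m := n i₀ with hmdef
  set r := ∑ i ∈ Finset.univ.erase i₀, n i with hrdef
  set A : Finset V := Finset.univ.filter (fun v => p v ≠ i₀) with hAdef
  set B : Finset V := Finset.univ.filter (fun v => p v = i₀) with hBdef
  have hNsum : N = ∑ i, n i := by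
    simp only [hn]
    rw [hNdef, ← Finset.card_univ,
      Finset.card_eq_sum_card_fiberwise (f := p) (t := Finset.univ) (by simp)]
  have hNrm : N = m + r := by
    rw [hNsum, hrdef, hmdef, ← Finset.add_sum_erase _ n (Finset.mem_univ i₀)]
  have hrm : r ≤ m := hbig
  have hBcard : B.card = m := (hn i₀).symm
  have hABcard : B.card + A.card = N := by
    rw [hAdef, hBdef, hNdef, ← Finset.card_univ]
    exact Finset.card_filter_add_card_filter_not _
  have hAcard : A.card = r := by omega
  -- r ≥ 1
  have hr1 : 1 ≤ r := by
    obtain ⟨i, hi⟩ := Fintype.exists_ne_of_one_lt_card (by simpa using (show 1 < k by omega)) i₀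
    obtain ⟨v, hv⟩ := hpart i
    have hvA : v ∈ A := by simp [hAdef, hv, hi]
    have := Finset.card_pos.mpr ⟨v, hvA⟩
    omega
  have hN1 : 1 ≤ N := by omega
  -- Lower bound: for any numbering f, strf G' f ≥ N + r
  have hlow : ∀ f : V ≃ Fin N, N + r ≤ strf G' f := by
    intro f
    set u := f.symm ⟨N - 1, by omega⟩ with hu
    have hfu : (f u : ℕ) = N - 1 := by rw [hu, f.apply_symm_apply]
    set S : Finset V := Finset.univ.filter (fun v => G'.Adj u v) with hS
    have hScard : r ≤ S.card := by
      by_cases hpu : p u = i₀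
      · have hAS : A ⊆ S := by
          intro v hv
          simp only [hAdef, Finset.mem_filter] at hv
          have hGuv : G.Adj u v := (hadj u v).mpr (by rw [hpu]; exact (Ne.symm hv.2))
          simp only [hS, Finset.mem_filter]
          exact ⟨Finset.mem_univ v, hkeep u v hGuv (Or.inl hpu)⟩
        calc r = A.card := hAcard.symm
          _ ≤ S.card := Finset.card_le_card hAS
      · have hBS : B ⊆ S := by
          intro v hv
          simp only [hBdef, Finset.mem_filter] at hv
          have hGuv : G.Adj u v := (hadj u v).mpr (by rw [hv.2]; exact hpu)
          simp only [hS, Finset.mem_filter]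
          exact ⟨Finset.mem_univ v, hkeep u v hGuv (Or.inr hv.2)⟩
        calc r ≤ m := hrm
          _ = B.card := hBcard.symm
          _ ≤ S.card := Finset.card_le_card hBS
    -- some v ∈ S has (f v) + 1 ≥ r
    have hex : ∃ v ∈ S, r ≤ (f v : ℕ) + 1 := by
      by_contra hcon
      push_neg at hcon
      have hsub' : S.image (fun v => (f v : ℕ)) ⊆ Finset.range (r - 1) := by
        intro x hx
        simp only [Finset.mem_image] at hx
        obtain ⟨v, hv, rfl⟩ := hx
        have := hcon v hv
        simp only [Finset.mem_range]
        omega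
      have hinj : Set.InjOn (fun v => (f v : ℕ)) S := by
        intro a _ b _ hab
        exact f.injective (Fin.val_injective hab)
      have h1 : S.card = (S.image (fun v => (f v : ℕ))).card :=
        (Finset.card_image_of_injOn hinj).symm
      have h2 := Finset.card_le_card hsub'
      rw [Finset.card_range] at h2
      omega
    obtain ⟨v, hvS, hv⟩ := hex
    have hadj' : G'.Adj u v := by
      simp only [hS, Finset.mem_filter] at hvS
      exact hvS.2
    have := le_strf G' f u v hadj'
    omega
  -- Upper bound numbering
  have hcA : Fintype.card {v // p v ≠ i₀} = r := by
    rw [Fintype.card_subtype]; exact hAcard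
  have hcB : Fintype.card {v // ¬ p v ≠ i₀} = m := by
    rw [Fintype.card_subtype]
    rw [show (Finset.univ.filter fun v => ¬ p v ≠ i₀) = B by
      ext v; simp [hBdef]]
    exact hBcard
  let g : V ≃ Fin N :=
    (Equiv.sumCompl (fun v => p v ≠ i₀)).symm.trans
      ((Equiv.sumCongr (Fintype.equivFinOfCardEq hcA) (Fintype.equivFinOfCardEq hcB)).trans
        (finSumFinEquiv.trans (finCongr (by omega))))
  have hgsmall : ∀ v, p v ≠ i₀ → (g v : ℕ) < r := by
    intro v hv
    have h0 : (Equiv.sumCompl (fun v => p v ≠ i₀)).symm v = Sum.inl ⟨v, hv⟩ :=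
      Equiv.sumCompl_symm_apply_of_pos (p := fun v => p v ≠ i₀) hv
    simp only [g, Equiv.trans_apply, h0, Equiv.sumCongr_apply, Sum.map_inl,
      finSumFinEquiv_apply_left, finCongr_apply, Fin.coe_cast, Fin.coe_castAdd,
      Function.comp_apply]
    exact (Fintype.equivFinOfCardEq hcA ⟨v, hv⟩).isLt
  have hup : strf G g ≤ N + r := by
    apply strf_le
    intro u v huv
    have hne : p u ≠ p v := (hadj u v).mp huv
    have h1 := (g u).isLt
    have h2 := (g v).isLt
    by_cases hu : p u = i₀
    · have hv : p v ≠ i₀ := by rw [← hu]; exact (Ne.symm hne)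
      have := hgsmall v hv
      omega
    · have := hgsmall u hu
      omega
  -- strength set nonempty facts
  have hG'ne : {s | ∃ f : V ≃ Fin N, s = strf G' f}.Nonempty := ⟨strf G' g, g, rfl⟩
  have hGne : {s | ∃ f : V ≃ Fin N, s = strf G f}.Nonempty := ⟨strf G g, g, rfl⟩
  have hstrG'_ge : N + r ≤ strength G' := by
    apply le_csInf hG'ne
    rintro s ⟨f, rfl⟩
    exact hlow f
  have hstrG_le : strength G ≤ N + r :=
    le_trans (Nat.sInf_le ⟨g, rfl⟩) hup
  have hmono : strength G' ≤ strength G := by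
    obtain ⟨f₀, hf₀⟩ := Nat.sInf_mem hGne
    have h1 : strength G' ≤ strf G' f₀ := Nat.sInf_le ⟨f₀, rfl⟩
    have h2 : strf G' f₀ ≤ strf G f₀ := by
      apply csSup_le'
      rintro s ⟨a, b, hab, rfl⟩
      exact le_strf G f₀ a b (hsub hab)
    calc strength G' ≤ strf G' f₀ := h1
      _ ≤ strf G f₀ := h2
      _ = strength G := hf₀.symm
  have key : 2 * N - m = N + r := by omega
  constructor
  · omega
  · omega
end
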